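/- arXiv:2407.17612 — 2 statements merged into one kernel-verified Lean document; each statement's English description precedes it below -/
import Mathlib

section
/- Let (X, τ, I) be an ideal topological space with I a maximal ideal. Then every subset A of X is either closed or open in the *-topology τ*. -/
open Set

def IsIdeal {X : Type*} (I : Set (Set X)) : Prop :=
  I.Nonempty ∧ (∀ A B : Set X, A ∈ I → B ⊆ A → B ∈ I) ∧
    (∀ A B : Set X, A ∈ I → B ∈ I → A ∪ B ∈ I)

def IsMaximalIdeal {X : Type*} (I : Set (Set X)) : Prop :=
  IsIdeal I ∧ I ≠ Set.univ ∧
    ∀ J : Set (Set X), IsIdeal J → I ⊆ J → J = I ∨ J = Set.univ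

def IsMinimalIdeal {X : Type*} (I : Set (Set X)) : Prop :=
  IsIdeal I ∧ I ≠ {∅} ∧ I ≠ Set.univ ∧
    ∀ J : Set (Set X), IsIdeal J → J ⊆ I → J = I ∨ J = {∅}

def Ann {X : Type*} (J : Set (Set X)) : Set (Set X) :=
  {A | ∀ B ∈ J, A ∩ B = ∅}

def idealQuot {X : Type*} (I J : Set (Set X)) : Set (Set X) :=
  {A | ∀ B ∈ J, A ∩ B ∈ I}

def localFn {X : Type*} [TopologicalSpace X] (I : Set (Set X)) (A : Set X) : Set X :=
  {x | ∀ U : Set X, IsOpen U → x ∈ U → U ∩ A ∉ I}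

def sharpFn {X : Type*} [TopologicalSpace X] (I : Set (Set X)) (A : Set X) : Set X :=
  {x | ∀ U : Set X, IsOpen U → x ∈ U → ∃ J ∈ I, J.Nonempty ∧ J ⊆ U ∩ A}

def starTop {X : Type*} (τ : TopologicalSpace X) (I : Set (Set X)) : TopologicalSpace X :=
  TopologicalSpace.generateFrom {A | @localFn X τ I Aᶜ ⊆ Aᶜ}

def sharpTop {X : Type*} (τ : TopologicalSpace X) (I : Set (Set X)) : TopologicalSpace X :=
  TopologicalSpace.generateFrom {A | @localFn X τ (Ann I) Aᶜ ⊆ Aᶜ}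

/-!
For a maximal ideal `I`, every set `A` has `A ∈ I` or `Aᶜ ∈ I`: if `A ∉ I`, the ideal generated by
`I` and `A` strictly contains `I`, so it contains `X`, i.e. `X ⊆ C ∪ A` for some `C ∈ I`. The local function of a member of `I` is
empty, so a member of `I` is τ*-closed and a set whose complement lies in `I` is τ*-open.
-/

namespace IsIdeal

variable {X : Type*} {I : Set (Set X)}

theorem adjoin (hI : IsIdeal I) (A : Set X) : IsIdeal {B | ∃ C ∈ I, B ⊆ C ∪ A} := by
  obtain ⟨⟨C₀, hC₀⟩, -, hunion⟩ := hI
  refine ⟨⟨C₀, C₀, hC₀, subset_union_left⟩, ?_, ?_⟩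
  · rintro B B' ⟨C, hC, hBC⟩ hB'B
    exact ⟨C, hC, hB'B.trans hBC⟩
  · rintro B B' ⟨C, hC, hBC⟩ ⟨C', hC', hB'C'⟩
    refine ⟨C ∪ C', hunion C C' hC hC', ?_⟩
    rw [union_union_distrib_right]
    exact union_subset_union hBC hB'C'

theorem localFn_eq_empty [TopologicalSpace X] (hI : IsIdeal I) {A : Set X} (hA : A ∈ I) :
    localFn I A = ∅ :=
  eq_empty_of_forall_notMem fun _ hx =>
    hx univ isOpen_univ (mem_univ _) (hI.2.1 A _ hA inter_subset_right)

theorem isOpen_starTop_of_compl_mem (τ : TopologicalSpace X) (hI : IsIdeal I) {A : Set X}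
    (hA : Aᶜ ∈ I) : @IsOpen X (starTop τ I) A := by
  apply TopologicalSpace.isOpen_generateFrom_of_mem
  change @localFn X τ I Aᶜ ⊆ Aᶜ
  rw [@localFn_eq_empty X I τ hI Aᶜ hA]
  exact empty_subset _

theorem isClosed_starTop_of_mem (τ : TopologicalSpace X) (hI : IsIdeal I) {A : Set X}
    (hA : A ∈ I) : @IsClosed X (starTop τ I) A :=
  @IsClosed.mk X (starTop τ I) A (hI.isOpen_starTop_of_compl_mem τ (by rwa [compl_compl]))

end IsIdeal

theorem IsMaximalIdeal.mem_or_compl_mem {X : Type*} {I : Set (Set X)} (hI : IsMaximalIdeal I)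
    (A : Set X) : A ∈ I ∨ Aᶜ ∈ I := by
  obtain ⟨hideal, -, hmax⟩ := hI
  refine or_iff_not_imp_left.2 fun hA => ?_
  obtain ⟨C₀, hC₀⟩ := hideal.1
  rcases hmax _ (hideal.adjoin A) fun C hC => ⟨C, hC, subset_union_left⟩ with heq | heq
  · exact absurd (heq ▸ ⟨C₀, hC₀, subset_union_right⟩) hA
  · obtain ⟨C, hC, hcover⟩ : univ ∈ {B | ∃ C ∈ I, B ⊆ C ∪ A} := heq ▸ mem_univ _
    exact hideal.2.1 C Aᶜ hC fun x hx => (hcover (mem_univ x)).resolve_right hx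

theorem stmt3 {X : Type*} (τ : TopologicalSpace X) (I : Set (Set X))
    (hI : IsMaximalIdeal I) (A : Set X) :
    @IsClosed X (starTop τ I) A ∨ @IsOpen X (starTop τ I) A :=
  (hI.mem_or_compl_mem A).imp (hI.1.isClosed_starTop_of_mem τ)
    (hI.1.isOpen_starTop_of_compl_mem τ)
end

section
/- Let (X, τ, I) be an ideal topological space with I a maximal ideal. Then the topological space (X, τ*) is T0. -/
open Set

/-!
If `{a} ∉ I` for a maximal ideal `I`, then `{A | A \ {a} ∈ I}` is an ideal strictly larger than
`I`, hence everything, so every other singleton lies in `I`. Members of `I` have empty local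
function and are therefore `τ*`-closed; thus of any two distinct points at least one is a closed
singleton for `τ*`, which gives `T0`.
-/

section

variable {X : Type*}

theorem IsIdeal.empty_mem {I : Set (Set X)} (hI : IsIdeal I) : ∅ ∈ I :=
  let ⟨A, hA⟩ := hI.1
  hI.2.1 A ∅ hA (empty_subset A)

theorem IsIdeal.setOf_sdiff_singleton_mem {I : Set (Set X)} (hI : IsIdeal I) (a : X) :
    IsIdeal {A | A \ {a} ∈ I} :=
  ⟨⟨∅, by simpa using hI.empty_mem⟩,
    fun _ _ hA hBA => hI.2.1 _ _ hA (sdiff_subset_sdiff_left hBA),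
    fun A B hA hB => by
      simpa only [mem_ofPred_eq, union_sdiff_distrib] using hI.2.2 _ _ hA hB⟩

theorem IsMaximalIdeal.singleton_mem_of_singleton_notMem {I : Set (Set X)}
    (hI : IsMaximalIdeal I) {a b : X} (hab : a ≠ b) (ha : {a} ∉ I) : {b} ∈ I := by
  have hJ : {A | A \ {a} ∈ I} = univ := by
    refine (hI.2.2 _ (hI.1.setOf_sdiff_singleton_mem a)
      fun A hA => hI.1.2.1 A _ hA sdiff_subset).resolve_left fun h => ha ?_
    rw [← h, mem_ofPred_eq, sdiff_self]
    exact hI.1.empty_mem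
  have hb : ({b} : Set X) \ {a} ∈ I := show {b} ∈ {A | A \ {a} ∈ I} from hJ ▸ mem_univ _
  rwa [sdiff_singleton_eq_self (notMem_singleton_iff.2 hab)] at hb

theorem localFn_eq_empty_of_mem [TopologicalSpace X] {I : Set (Set X)} (hI : IsIdeal I)
    {A : Set X} (hA : A ∈ I) : localFn I A = ∅ :=
  eq_empty_of_forall_notMem fun _ hx =>
    hx univ isOpen_univ (mem_univ _) (hI.2.1 A _ hA inter_subset_right)

theorem isClosed_starTop_of_mem (τ : TopologicalSpace X) {I : Set (Set X)} (hI : IsIdeal I)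
    {A : Set X} (hA : A ∈ I) : @IsClosed X (starTop τ I) A := by
  refine @IsClosed.mk X (starTop τ I) A (TopologicalSpace.GenerateOpen.basic _ ?_)
  simp only [mem_ofPred_eq, compl_compl, localFn_eq_empty_of_mem hI hA, empty_subset]

theorem t0Space_of_isClosed_singleton_or [TopologicalSpace X]
    (h : ∀ a b : X, a ≠ b → IsClosed {a} ∨ IsClosed {b}) : T0Space X := by
  refine (t0Space_iff_or_notMem_closure X).2 fun a b hab => ?_
  rcases h a b hab with ha | hb
  · exact Or.inr (by rw [ha.closure_eq]; exact Ne.symm hab)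
  · exact Or.inl (by rw [hb.closure_eq]; exact hab)

end

theorem stmt4 {X : Type*} (τ : TopologicalSpace X) (I : Set (Set X))
    (hI : IsMaximalIdeal I) :
    @T0Space X (starTop τ I) := by
  let := starTop τ I
  refine t0Space_of_isClosed_singleton_or fun a b hab => ?_
  by_cases ha : {a} ∈ I
  · exact Or.inl (isClosed_starTop_of_mem τ hI.1 ha)
  · exact Or.inr (isClosed_starTop_of_mem τ hI.1 (hI.singleton_mem_of_singleton_notMem hab ha))
end
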